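/- Let C ≅ ℙ¹ be embedded in ℙ³ by i(u:v) = (u⁵ : u⁴v : uv⁴ : v⁵), and let φ : ℙ¹ → ℙ¹ be a degree-2 morphism given by (P(u,v) : Q(u,v)) where P(u,v) = au² + buv + cv² with abc ≠ 0, over a field of characteristic 0. Then there is no morphism ψ : ℙ³ → ℙ³ with ψ ∘ i = i ∘ φ. -/

import Mathlib

open MvPolynomial


lemma aux_cancel {k : Type*} [Field k] {x y : k} (hx : x ≠ 0) (h : x * y = 0) : y = 0 :=
  (mul_eq_zero.mp h).resolve_left hx

lemma aux_vanish {k : Type*} [CommRing k] {σ : Type*} [Fintype σ] [DecidableEq σ]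
    (g : σ → ℕ) (F : MvPolynomial σ k) {N n : ℕ} (hF : F.IsHomogeneous N)
    (h : ∀ m : σ →₀ ℕ, (∑ i, m i) = N → (∑ i, g i * m i) ≠ n) :
    (MvPolynomial.aeval (fun i => (Polynomial.X : Polynomial k) ^ g i) F).coeff n = 0 := by
  conv_lhs => rw [F.as_sum]
  rw [map_sum, Polynomial.finset_sum_coeff]
  apply Finset.sum_eq_zero
  intro m hm
  have hw : (∑ i, m i) = N := by
    have := hF (MvPolynomial.mem_support_iff.mp hm)
    rw [Finsupp.weight_apply, Finsupp.sum_fintype] at this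
    · simpa using this
    · intro i; simp
  rw [MvPolynomial.aeval_monomial]
  simp only [← pow_mul]
  rw [Finsupp.prod_fintype _ _ (fun i => by simp)]
  rw [Finset.prod_pow_eq_pow_sum]
  rw [Polynomial.algebraMap_eq, Polynomial.coeff_C_mul, Polynomial.coeff_X_pow]
  rw [if_neg (Ne.symm (h m hw)), mul_zero]

lemma aux_c7_p5 {k : Type*} [Field k] (a b c : k) :
    ((Polynomial.C a * Polynomial.X^2 + Polynomial.C b * Polynomial.X +
      Polynomial.C c)^5).coeff 7 = 20*(a^3*b*c) + 10*(a^2*b^3) := by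
  ring_nf
  simp only [← Polynomial.C_pow, Polynomial.coeff_add, Polynomial.coeff_mul_ofNat,
    Polynomial.coeff_mul_C, Polynomial.coeff_C_mul, Polynomial.coeff_X_pow, Polynomial.coeff_C,
    Polynomial.coeff_X_mul, Polynomial.coeff_X]
  norm_num
  try ring

lemma aux_c7_p4q {k : Type*} [Field k] (a b c d e f : k) :
    ((Polynomial.C a * Polynomial.X^2 + Polynomial.C b * Polynomial.X + Polynomial.C c)^4 *
      (Polynomial.C d * Polynomial.X^2 + Polynomial.C e * Polynomial.X + Polynomial.C f)).coeff 7 =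
    4*a^3*b*f + (6*a^2*b^2+4*a^3*c)*e + (4*a*b^3+12*a^2*b*c)*d := by
  ring_nf
  simp only [← Polynomial.C_pow, Polynomial.coeff_add, Polynomial.coeff_mul_ofNat,
    Polynomial.coeff_mul_C, Polynomial.coeff_C_mul, Polynomial.coeff_X_pow, Polynomial.coeff_C,
    Polynomial.coeff_X_mul, Polynomial.coeff_X]
  norm_num
  try ring

lemma aux_c7_pq4 {k : Type*} [Field k] (a b c d e f : k) :
    ((Polynomial.C a * Polynomial.X^2 + Polynomial.C b * Polynomial.X + Polynomial.C c) *
      (Polynomial.C d * Polynomial.X^2 + Polynomial.C e * Polynomial.X + Polynomial.C f)^4).coeff 7 =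
    a*(4*d*e^3+12*d^2*e*f) + b*(6*d^2*e^2+4*d^3*f) + 4*c*d^3*e := by
  ring_nf
  simp only [← Polynomial.C_pow, Polynomial.coeff_add, Polynomial.coeff_mul_ofNat,
    Polynomial.coeff_mul_C, Polynomial.coeff_C_mul, Polynomial.coeff_X_pow, Polynomial.coeff_C,
    Polynomial.coeff_X_mul, Polynomial.coeff_X]
  norm_num
  try ring

lemma aux_c7_q5 {k : Type*} [Field k] (d e f : k) :
    ((Polynomial.C d * Polynomial.X^2 + Polynomial.C e * Polynomial.X +
      Polynomial.C f)^5).coeff 7 = 20*(d^3*e*f) + 10*(d^2*e^3) := by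
  exact aux_c7_p5 d e f

lemma aux_c3_q5 {k : Type*} [Field k] (d e f : k) :
    ((Polynomial.C d * Polynomial.X^2 + Polynomial.C e * Polynomial.X +
      Polynomial.C f)^5).coeff 3 = 20*(f^3*e*d) + 10*(f^2*e^3) := by
  ring_nf
  simp only [← Polynomial.C_pow, Polynomial.coeff_add, Polynomial.coeff_mul_ofNat,
    Polynomial.coeff_mul_C, Polynomial.coeff_C_mul, Polynomial.coeff_X_pow, Polynomial.coeff_C,
    Polynomial.coeff_X_mul, Polynomial.coeff_X]
  norm_num
  try ring

/-- The pure field algebra: from the five coefficient equations conclude `a•Q = d•P`. -/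
lemma aux_alg {k : Type*} [Field k] [CharZero k] (a b c d e f : k)
    (ha : a ≠ 0) (hb : b ≠ 0) (hc : c ≠ 0)
    (E0 : 20*(a^3*b*c) + 10*(a^2*b^3) = 0)
    (E1 : 4*a^3*b*f + (6*a^2*b^2+4*a^3*c)*e + (4*a*b^3+12*a^2*b*c)*d = 0)
    (E2 : a*(4*d*e^3+12*d^2*e*f) + b*(6*d^2*e^2+4*d^3*f) + 4*c*d^3*e = 0)
    (E3 : 20*(d^3*e*f) + 10*(d^2*e^3) = 0)
    (E3' : 20*(f^3*e*d) + 10*(f^2*e^3) = 0) :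
    a*e = b*d ∧ a*f = c*d := by
  have h10 : (10 : k) ≠ 0 := by norm_num
  have h4 : (4 : k) ≠ 0 := by norm_num
  have h2 : (2 : k) ≠ 0 := by norm_num
  have hb2 : b^2 + 2*a*c = 0 :=
    aux_cancel (mul_ne_zero h10 (mul_ne_zero (pow_ne_zero 2 ha) hb))
      (by linear_combination E0)
  have hi : 2*a^2*f + 2*a*b*e - b^2*d = 0 :=
    aux_cancel (mul_ne_zero (mul_ne_zero h2 ha) hb)
      (by linear_combination E1 - (2*a^2*e + 6*a*b*d) * hb2)
  by_cases he : e = 0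
  · subst he
    have hd3f : d^3 * f = 0 :=
      aux_cancel (mul_ne_zero hb h4) (by linear_combination E2)
    rcases mul_eq_zero.mp hd3f with h | hf
    · have hd : d = 0 := by
        have := pow_eq_zero_iff (n := 3) (by norm_num) |>.mp h
        exact this
      subst hd
      have hf : f = 0 :=
        aux_cancel (mul_ne_zero h2 (pow_ne_zero 2 ha)) (by linear_combination hi)
      subst hf; constructor <;> ring
    · subst hf
      have hd : d = 0 :=
        aux_cancel (pow_ne_zero 2 hb) (by linear_combination -hi)
      subst hd; constructor <;> ring
  · have hd3 : d = 0 ∨ e^2 + 2*d*f = 0 := by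
      rcases mul_eq_zero.mp
        (show (10*(d^2*e)) * (e^2 + 2*d*f) = 0 by linear_combination E3) with h | h
      · left
        have h' : d^2 * e = 0 := aux_cancel h10 h
        rcases mul_eq_zero.mp h' with h'' | h''
        · exact pow_eq_zero_iff (n := 2) (by norm_num) |>.mp h''
        · exact absurd h'' he
      · right; exact h
    have hf3 : f = 0 ∨ e^2 + 2*d*f = 0 := by
      rcases mul_eq_zero.mp
        (show (10*(f^2*e)) * (e^2 + 2*d*f) = 0 by linear_combination E3') with h | h
      · left
        have h' : f^2 * e = 0 := aux_cancel h10 h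
        rcases mul_eq_zero.mp h' with h'' | h''
        · exact pow_eq_zero_iff (n := 2) (by norm_num) |>.mp h''
        · exact absurd h'' he
      · right; exact h
    have hq2 : e^2 + 2*d*f = 0 := by
      rcases hd3 with hd | hq2
      · rcases hf3 with hf | hq2
        · exfalso
          apply he
          have h : (2*a*b) * e = 0 := by rw [hd, hf] at hi; linear_combination hi
          exact aux_cancel (mul_ne_zero (mul_ne_zero h2 ha) hb) h
        · exact hq2
      · exact hq2
    rcases hd3 with hd | _
    · exfalso
      apply he
      have h : e^2 = 0 := by rw [hd] at hq2; linear_combination hq2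
      exact pow_eq_zero_iff (n := 2) (by norm_num) |>.mp h
    have hsq : (a*e - b*d)^2 = 0 := by linear_combination a^2*hq2 - d*hi
    have hae : a*e = b*d :=
      sub_eq_zero.mp (pow_eq_zero_iff (n := 2) (by norm_num) |>.mp hsq)
    have hdne : d ≠ 0 := by
      intro hd
      apply he
      rw [hd, mul_zero] at hae
      exact aux_cancel ha hae
    have haf : a*f = c*d := by
      have h : (2*a*d) * (a*f - c*d) = 0 := by
        linear_combination a^2*hq2 - d^2*hb2 - (a*e+b*d)*hae
      exact sub_eq_zero.mp (aux_cancel (mul_ne_zero (mul_ne_zero h2 ha) hdne) h)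
    exact ⟨hae, haf⟩

/-- Let `C ≅ ℙ¹` be embedded in `ℙ³` by `i(u:v) = (u⁵ : u⁴v : uv⁴ : v⁵)` and let
`φ : ℙ¹ → ℙ¹` be the degree-2 morphism `(u:v) ↦ (P(u,v) : Q(u,v))` with
`P = au² + buv + cv²`, `abc ≠ 0`, in characteristic zero (`φ` a morphism: `P` and `Q`
have no common projective zero).  Then no morphism `ψ : ℙ³ → ℙ³` satisfies
`ψ ∘ i = i ∘ φ`:  such a `ψ` would be given by degree-2 forms `F₀, …, F₃` whose
restrictions to `C` — i.e. substitutions `F i (u⁵, u⁴v, uv⁴, v⁵)` — agree with the forms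
`(P⁵, P⁴Q, PQ⁴, Q⁵)` of `i ∘ φ` up to a common nonzero scalar `lam`. -/
theorem stmt_9 {k : Type*} [Field k] [CharZero k] (a b c : k) (habc : a * b * c ≠ 0)
    (P Q : MvPolynomial (Fin 2) k)
    (hP : P = C a * X 0 ^ 2 + C b * X 0 * X 1 + C c * X 1 ^ 2)
    (hQ : Q.IsHomogeneous 2)
    (hmor : ∀ v : Fin 2 → AlgebraicClosure k, v ≠ 0 →
      ¬ (aeval v P = 0 ∧ aeval v Q = 0)) :
    ¬ ∃ (F : Fin 4 → MvPolynomial (Fin 4) k) (lam : k), lam ≠ 0 ∧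
        (∀ i, (F i).IsHomogeneous 2) ∧
        aeval ![(X 0 : MvPolynomial (Fin 2) k) ^ 5, X 0 ^ 4 * X 1, X 0 * X 1 ^ 4, X 1 ^ 5]
            (F 0) = lam • (P ^ 5) ∧
        aeval ![(X 0 : MvPolynomial (Fin 2) k) ^ 5, X 0 ^ 4 * X 1, X 0 * X 1 ^ 4, X 1 ^ 5]
            (F 1) = lam • (P ^ 4 * Q) ∧
        aeval ![(X 0 : MvPolynomial (Fin 2) k) ^ 5, X 0 ^ 4 * X 1, X 0 * X 1 ^ 4, X 1 ^ 5]
            (F 2) = lam • (P * Q ^ 4) ∧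
        aeval ![(X 0 : MvPolynomial (Fin 2) k) ^ 5, X 0 ^ 4 * X 1, X 0 * X 1 ^ 4, X 1 ^ 5]
            (F 3) = lam • (Q ^ 5) := by
  rintro ⟨F, lam, hlam, hFh, h0, h1, h2, h3⟩
  classical
  have ha : a ≠ 0 := fun h => habc (by rw [h]; ring)
  have hb : b ≠ 0 := fun h => habc (by rw [h]; ring)
  have hc : c ≠ 0 := fun h => habc (by rw [h]; ring)
  -- the substitution map to univariate polynomials
  set π : MvPolynomial (Fin 2) k →ₐ[k] Polynomial k :=
    MvPolynomial.aeval ![Polynomial.X, 1] with hπ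
  have hp : π P = Polynomial.C a * Polynomial.X ^ 2 + Polynomial.C b * Polynomial.X +
      Polynomial.C c := by
    rw [hP]
    simp [hπ, MvPolynomial.algebraMap_eq]
    try ring
  -- decompose π Q
  set q : Polynomial k := π Q with hqdef
  set d : k := q.coeff 2 with hd
  set e : k := q.coeff 1 with he
  set f : k := q.coeff 0 with hf
  have hqvan : ∀ n : ℕ, 3 ≤ n → q.coeff n = 0 := by
    intro n hn
    have hfun2 : (fun i => (Polynomial.X : Polynomial k) ^ (![1,0] : Fin 2 → ℕ) i) =
        ![Polynomial.X, (1 : Polynomial k)] := by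
      funext i; fin_cases i <;> simp
    have := aux_vanish (![1,0] : Fin 2 → ℕ) Q hQ (n := n)
      (by intro m hm; rw [Fin.sum_univ_two] at hm ⊢; simp only [Matrix.cons_val_zero,
        Matrix.cons_val_one, Matrix.head_cons]; omega)
    rw [hfun2] at this
    exact this
  have hq : q = Polynomial.C d * Polynomial.X ^ 2 + Polynomial.C e * Polynomial.X +
      Polynomial.C f := by
    ext n
    match n with
    | 0 => simp [Polynomial.coeff_C]; rfl
    | 1 => simp [Polynomial.coeff_C]; rfl
    | 2 => simp [Polynomial.coeff_C]; rfl
    | (n+3) =>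
      rw [hqvan (n+3) (by omega)]
      simp [Polynomial.coeff_X_pow, Polynomial.coeff_C]
      try omega
  -- the key vanishing of coefficients 3 and 7
  have key : ∀ (G : MvPolynomial (Fin 4) k), G.IsHomogeneous 2 → ∀ n : ℕ, n = 3 ∨ n = 7 →
      (π (aeval ![(X 0 : MvPolynomial (Fin 2) k) ^ 5, X 0 ^ 4 * X 1, X 0 * X 1 ^ 4, X 1 ^ 5]
        G)).coeff n = 0 := by
    intro G hG n hn
    rw [MvPolynomial.comp_aeval_apply]
    have hfun4 : (fun i => π ((![(X 0 : MvPolynomial (Fin 2) k) ^ 5, X 0 ^ 4 * X 1,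
        X 0 * X 1 ^ 4, X 1 ^ 5]) i)) =
        (fun i => (Polynomial.X : Polynomial k) ^ (![5,4,1,0] : Fin 4 → ℕ) i) := by
      funext i; fin_cases i <;> simp [hπ]
    rw [hfun4]
    apply aux_vanish _ _ hG
    intro m hm
    rw [Fin.sum_univ_four] at hm ⊢
    simp only [show (![5,4,1,0] : Fin 4 → ℕ) 0 = 5 from rfl,
      show (![5,4,1,0] : Fin 4 → ℕ) 1 = 4 from rfl,
      show (![5,4,1,0] : Fin 4 → ℕ) 2 = 1 from rfl,
      show (![5,4,1,0] : Fin 4 → ℕ) 3 = 0 from rfl]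
    have h0 : m 0 ≤ 2 := by omega
    have h1 : m 1 ≤ 2 := by omega
    rcases hn with rfl | rfl <;>
      (interval_cases (m 0) <;> interval_cases (m 1) <;> omega)
  -- extract the five coefficient equations
  have extract : ∀ (G : MvPolynomial (Fin 4) k), G.IsHomogeneous 2 →
      ∀ (R : MvPolynomial (Fin 2) k),
      aeval ![(X 0 : MvPolynomial (Fin 2) k) ^ 5, X 0 ^ 4 * X 1, X 0 * X 1 ^ 4, X 1 ^ 5] G
        = lam • R → ∀ n : ℕ, n = 3 ∨ n = 7 → (π R).coeff n = 0 := by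
    intro G hG R hGR n hn
    have h := congrArg (fun r => (π r).coeff n) hGR
    rw [key G hG n hn, map_smul, Polynomial.coeff_smul, smul_eq_mul] at h
    exact aux_cancel hlam h.symm
  have E0 : 20*(a^3*b*c) + 10*(a^2*b^3) = 0 := by
    have := extract (F 0) (hFh 0) _ h0 7 (Or.inr rfl)
    rw [map_pow, hp, aux_c7_p5] at this
    exact this
  have E1 : 4*a^3*b*f + (6*a^2*b^2+4*a^3*c)*e + (4*a*b^3+12*a^2*b*c)*d = 0 := by
    have := extract (F 1) (hFh 1) _ h1 7 (Or.inr rfl)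
    rw [map_mul, map_pow, hp, ← hqdef, hq, aux_c7_p4q] at this
    exact this
  have E2 : a*(4*d*e^3+12*d^2*e*f) + b*(6*d^2*e^2+4*d^3*f) + 4*c*d^3*e = 0 := by
    have := extract (F 2) (hFh 2) _ h2 7 (Or.inr rfl)
    rw [map_mul, map_pow, hp, ← hqdef, hq, aux_c7_pq4] at this
    exact this
  have E3 : 20*(d^3*e*f) + 10*(d^2*e^3) = 0 := by
    have := extract (F 3) (hFh 3) _ h3 7 (Or.inr rfl)
    rw [map_pow, ← hqdef, hq, aux_c7_q5] at this
    exact this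
  have E3' : 20*(f^3*e*d) + 10*(f^2*e^3) = 0 := by
    have := extract (F 3) (hFh 3) _ h3 3 (Or.inl rfl)
    rw [map_pow, ← hqdef, hq, aux_c3_q5] at this
    exact this
  obtain ⟨hae, haf⟩ := aux_alg a b c d e f ha hb hc E0 E1 E2 E3 E3'
  -- now produce a common root of P and Q in the algebraic closure
  set K := AlgebraicClosure k
  set ι : k →+* K := algebraMap k K with hι
  have hιinj : Function.Injective ι := ι.injective
  have hιa : ι a ≠ 0 := fun h => ha (hιinj (by simpa using h))
  set p' : Polynomial K := Polynomial.C (ι a) * Polynomial.X ^ 2 + Polynomial.C (ι b) *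
    Polynomial.X + Polynomial.C (ι c) with hp'
  have hdeg : p'.degree = 2 := Polynomial.degree_quadratic hιa
  obtain ⟨z, hz⟩ := IsAlgClosed.exists_root p' (by rw [hdeg]; exact (by decide))
  have hz' : ι a * z^2 + ι b * z + ι c = 0 := by
    have := hz
    simp only [Polynomial.IsRoot, hp', Polynomial.eval_add, Polynomial.eval_mul,
      Polynomial.eval_pow, Polynomial.eval_C, Polynomial.eval_X] at this
    exact this
  set v : Fin 2 → K := ![z, 1] with hv
  have hvne : v ≠ 0 := by
    intro h
    have := congrFun h 1
    simp [hv] at this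
  apply hmor v hvne
  constructor
  · rw [hP]
    simp only [map_add, map_mul, map_pow, MvPolynomial.aeval_X, MvPolynomial.aeval_C, hv,
      Matrix.cons_val_zero, Matrix.cons_val_one, Matrix.head_cons]
    rw [show (algebraMap k K) = ι from rfl]
    linear_combination hz'
  · have hcomp : MvPolynomial.aeval v Q = Polynomial.aeval z q := by
      rw [hqdef, hπ, MvPolynomial.comp_aeval_apply]
      rw [show (fun i => Polynomial.aeval z ((![Polynomial.X, 1] : Fin 2 → Polynomial k) i)) = v
        from by funext i; fin_cases i <;> simp [hv]]
    rw [hcomp, hq]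
    simp only [map_add, map_mul, map_pow, Polynomial.aeval_X, Polynomial.aeval_C]
    rw [show (algebraMap k K) = ι from rfl]
    have h1 : ι a * ι e = ι b * ι d := by rw [← map_mul, ← map_mul, hae]
    have h2 : ι a * ι f = ι c * ι d := by rw [← map_mul, ← map_mul, haf]
    apply aux_cancel hιa
    linear_combination (ι d) * hz' + z * h1 + h2
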